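/- With λ > 0, N > T, and δ(M) the nonnegative fixed point of δ = (1/N) Tr((M/(1+δ) + λ I_T)⁻¹ M) for positive semidefinite M ∈ ℝ^{T×T}, the map M ↦ δ(M) is Lipschitz with respect to the Frobenius norm with constant at most √T / (λ (N − T)). -/

import Mathlib

open Matrix

/-- Frobenius norm of a real matrix. -/
noncomputable def frobNorm {T : ℕ} (M : Matrix (Fin T) (Fin T) ℝ) : ℝ :=
  Real.sqrt (∑ i, ∑ j, (M i j) ^ 2)

section Aux
variable {n : ℕ}

lemma psd_trace_nonneg' {P : Matrix (Fin n) (Fin n) ℝ} (hP : P.PosSemidef) :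
    0 ≤ P.trace := by
  rw [Matrix.trace]
  refine Finset.sum_nonneg fun i _ => ?_
  have h := hP.dotProduct_mulVec_nonneg (Pi.single i 1)
  simpa [Matrix.mulVec_single, dotProduct, Pi.single_apply] using h

lemma psd_smul' {P : Matrix (Fin n) (Fin n) ℝ} (hP : P.PosSemidef) {c : ℝ} (hc : 0 ≤ c) :
    (c • P).PosSemidef := by
  refine ⟨?_, fun x => ?_⟩
  · show (c • P)ᴴ = c • P
    rw [Matrix.conjTranspose_smul, hP.1.eq, star_trivial]
  · exact (hP.smul hc).2 x

lemma psd_trace_mul_nonneg {P R : Matrix (Fin n) (Fin n) ℝ}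
    (hP : P.PosSemidef) (hR : R.PosSemidef) : 0 ≤ (P * R).trace := by
  obtain ⟨S, hS, h1⟩ : ∃ S : Matrix (Fin n) (Fin n) ℝ, S.PosSemidef ∧ S * S = P := by
    open scoped MatrixOrder in
    exact ⟨CFC.sqrt P, (CFC.sqrt_nonneg P).posSemidef, CFC.sqrt_mul_sqrt_self P hP.nonneg⟩
  have hpsd := hR.mul_mul_conjTranspose_same S
  rw [hS.isHermitian.eq] at hpsd
  have h2 : (P * R).trace = (S * R * S).trace := by
    conv_lhs => rw [← h1]
    rw [Matrix.mul_assoc, Matrix.trace_mul_comm, Matrix.mul_assoc]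
  rw [h2]
  exact psd_trace_nonneg' hpsd
end Aux

lemma frob_eq_trace {n : ℕ} (S : Matrix (Fin n) (Fin n) ℝ) :
    frobNorm S = Real.sqrt ((Sᵀ * S).trace) := by
  unfold frobNorm
  congr 1
  rw [Matrix.trace]
  simp only [Matrix.diag, Matrix.mul_apply, Matrix.transpose_apply, ← sq]
  exact Finset.sum_comm

lemma abs_trace_transpose_mul_le {n : ℕ} (S D : Matrix (Fin n) (Fin n) ℝ) :
    |(Sᵀ * D).trace| ≤ frobNorm S * frobNorm D := by
  have ht : (Sᵀ * D).trace = ∑ p : Fin n × Fin n, S p.2 p.1 * D p.2 p.1 := by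
    rw [Matrix.trace, Fintype.sum_prod_type]
    simp [Matrix.diag, Matrix.mul_apply]
  have hS : ∑ p : Fin n × Fin n, (S p.2 p.1) ^ 2 = ∑ i, ∑ j, (S i j) ^ 2 := by
    rw [Fintype.sum_prod_type]; exact Finset.sum_comm
  have hD : ∑ p : Fin n × Fin n, (D p.2 p.1) ^ 2 = ∑ i, ∑ j, (D i j) ^ 2 := by
    rw [Fintype.sum_prod_type]; exact Finset.sum_comm
  have hcs := Finset.sum_mul_sq_le_sq_mul_sq Finset.univ
    (fun p : Fin n × Fin n => S p.2 p.1) (fun p => D p.2 p.1)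
  rw [ht]
  have h1 : |∑ p : Fin n × Fin n, S p.2 p.1 * D p.2 p.1|
      = Real.sqrt ((∑ p : Fin n × Fin n, S p.2 p.1 * D p.2 p.1) ^ 2) :=
    (Real.sqrt_sq_eq_abs _).symm
  rw [h1, frobNorm, frobNorm, ← Real.sqrt_mul (by positivity), ← hS, ← hD]
  exact Real.sqrt_le_sqrt hcs

section Resolvent
variable {n : ℕ} {lam c : ℝ} {M : Matrix (Fin n) (Fin n) ℝ}

lemma A_posDef (hlam : 0 < lam) (hc : 0 ≤ c) (hM : M.PosSemidef) :
    (c • M + lam • (1 : Matrix (Fin n) (Fin n) ℝ)).PosDef := by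
  refine Matrix.PosDef.posSemidef_add (psd_smul' hM hc) ?_
  rw [Matrix.smul_one_eq_diagonal]
  exact Matrix.PosDef.diagonal (fun _ => hlam)

lemma QA_one (hlam : 0 < lam) (hc : 0 ≤ c) (hM : M.PosSemidef) :
    (c • M + lam • (1 : Matrix (Fin n) (Fin n) ℝ))⁻¹ *
      (c • M + lam • (1 : Matrix (Fin n) (Fin n) ℝ)) = 1 :=
  Matrix.nonsing_inv_mul _ (A_posDef hlam hc hM).det_pos.ne'.isUnit

lemma AQ_one (hlam : 0 < lam) (hc : 0 ≤ c) (hM : M.PosSemidef) :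
    (c • M + lam • (1 : Matrix (Fin n) (Fin n) ℝ)) *
      (c • M + lam • (1 : Matrix (Fin n) (Fin n) ℝ))⁻¹ = 1 :=
  Matrix.mul_nonsing_inv _ (A_posDef hlam hc hM).det_pos.ne'.isUnit

lemma Q_psd (hlam : 0 < lam) (hc : 0 ≤ c) (hM : M.PosSemidef) :
    ((c • M + lam • (1 : Matrix (Fin n) (Fin n) ℝ))⁻¹).PosSemidef :=
  (A_posDef hlam hc hM).posSemidef.inv


lemma MM_psd (hM : M.PosSemidef) : (M * M).PosSemidef := by
  have h := Matrix.posSemidef_conjTranspose_mul_self M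
  rwa [hM.1.eq] at h

lemma QM_psd (hlam : 0 < lam) (hc : 0 ≤ c) (hM : M.PosSemidef) :
    ((c • M + lam • (1 : Matrix (Fin n) (Fin n) ℝ))⁻¹ * M).PosSemidef := by
  set A := c • M + lam • (1 : Matrix (Fin n) (Fin n) ℝ) with hAdef
  set Q := A⁻¹ with hQdef
  have hAQ : A * Q = 1 := AQ_one hlam hc hM
  have hQh : Qᴴ = Q := (Q_psd hlam hc hM).isHermitian.eq
  have hMA : M * A = c • (M * M) + lam • M := by
    rw [hAdef, Matrix.mul_add, Matrix.mul_smul, Matrix.mul_smul, Matrix.mul_one]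
  have hpsd : (c • (M * M) + lam • M).PosSemidef :=
    (psd_smul' (MM_psd hM) hc).add (psd_smul' hM hlam.le)
  have key : Q * (c • (M * M) + lam • M) * Q = Q * M := by
    rw [← hMA, ← Matrix.mul_assoc Q M A, Matrix.mul_assoc (Q * M) A Q, hAQ, Matrix.mul_one]
  have h := hpsd.mul_mul_conjTranspose_same Q
  rwa [hQh, key] at h

lemma MQ_psd (hlam : 0 < lam) (hc : 0 ≤ c) (hM : M.PosSemidef) :
    (M * (c • M + lam • (1 : Matrix (Fin n) (Fin n) ℝ))⁻¹).PosSemidef := by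
  have h := (QM_psd hlam hc hM).transpose
  rwa [Matrix.transpose_mul,
    ← Matrix.conjTranspose_eq_transpose_of_trivial,
    ← Matrix.conjTranspose_eq_transpose_of_trivial,
    hM.1.eq, (Q_psd hlam hc hM).isHermitian.eq] at h

lemma bound_psd (hlam : 0 < lam) (hc : 0 ≤ c) (hM : M.PosSemidef) :
    ((lam ^ 2)⁻¹ • (1 : Matrix (Fin n) (Fin n) ℝ)
      - (c • M + lam • (1 : Matrix (Fin n) (Fin n) ℝ))⁻¹ *
        (c • M + lam • (1 : Matrix (Fin n) (Fin n) ℝ))⁻¹).PosSemidef := by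
  set A := c • M + lam • (1 : Matrix (Fin n) (Fin n) ℝ) with hAdef
  set Q := A⁻¹ with hQdef
  have hQA : Q * A = 1 := QA_one hlam hc hM
  have hAQ : A * Q = 1 := AQ_one hlam hc hM
  have hQh : Qᴴ = Q := (Q_psd hlam hc hM).isHermitian.eq
  have hlam2 : (lam ^ 2 : ℝ) ≠ 0 := by positivity
  have hAA : A * A - (lam ^ 2) • (1 : Matrix (Fin n) (Fin n) ℝ)
      = (c ^ 2) • (M * M) + (2 * c * lam) • M := by
    rw [hAdef]
    simp only [Matrix.add_mul, Matrix.mul_add, Matrix.smul_mul, Matrix.mul_smul,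
      smul_smul, Matrix.mul_one, Matrix.one_mul]
    module
  have hpsd : ((c ^ 2) • (M * M) + (2 * c * lam) • M).PosSemidef :=
    (psd_smul' (MM_psd hM) (by positivity)).add (psd_smul' hM (by positivity))
  have h1 : Q * (A * A) * Q = 1 := by
    rw [← Matrix.mul_assoc Q A A, hQA, Matrix.one_mul, hAQ]
  have key : Q * ((lam ^ 2)⁻¹ • ((c ^ 2) • (M * M) + (2 * c * lam) • M)) * Q
      = (lam ^ 2)⁻¹ • (1 : Matrix (Fin n) (Fin n) ℝ) - Q * Q := by
    rw [← hAA, Matrix.mul_smul, Matrix.smul_mul, Matrix.mul_sub, Matrix.sub_mul, h1,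
      Matrix.mul_smul, Matrix.mul_one, Matrix.smul_mul, smul_sub, smul_smul,
      inv_mul_cancel₀ hlam2, one_smul]
  have h := (psd_smul' hpsd (by positivity : (0:ℝ) ≤ (lam ^ 2)⁻¹)).mul_mul_conjTranspose_same Q
  rwa [hQh, key] at h

end Resolvent

lemma delta_aux (T N : ℕ) (hTN : T < N) (lam : ℝ) (hlam : 0 < lam)
    (M₁ M₂ : Matrix (Fin T) (Fin T) ℝ) (hM₁ : M₁.PosSemidef) (hM₂ : M₂.PosSemidef)
    (δ₁ δ₂ : ℝ) (hδ₁ : 0 ≤ δ₁) (hδ₂ : 0 ≤ δ₂) (hle : δ₂ ≤ δ₁)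
    (hfix₁ : δ₁ = (N : ℝ)⁻¹ *
      ((((1 + δ₁)⁻¹ • M₁ + lam • (1 : Matrix (Fin T) (Fin T) ℝ))⁻¹ * M₁).trace))
    (hfix₂ : δ₂ = (N : ℝ)⁻¹ *
      ((((1 + δ₂)⁻¹ • M₂ + lam • (1 : Matrix (Fin T) (Fin T) ℝ))⁻¹ * M₂).trace)) :
    δ₁ - δ₂ ≤ Real.sqrt T / (lam * ((N : ℝ) - T)) * frobNorm (M₁ - M₂) := by
  have h1δ₁ : (0:ℝ) < 1 + δ₁ := by linarith
  have h1δ₂ : (0:ℝ) < 1 + δ₂ := by linarith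
  have hc₁ : (0:ℝ) ≤ (1 + δ₁)⁻¹ := inv_nonneg.mpr h1δ₁.le
  have hc₂ : (0:ℝ) ≤ (1 + δ₂)⁻¹ := inv_nonneg.mpr h1δ₂.le
  have hNpos : (0:ℝ) < N := by exact_mod_cast Nat.pos_of_ne_zero (by omega)
  have hN : ((N:ℝ)) ≠ 0 := hNpos.ne'
  have hNT : (0:ℝ) < (N:ℝ) - T := by
    have : (T:ℝ) < N := by exact_mod_cast hTN
    linarith
  set A₁ := (1 + δ₁)⁻¹ • M₁ + lam • (1 : Matrix (Fin T) (Fin T) ℝ) with hA₁def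
  set A₂ := (1 + δ₂)⁻¹ • M₂ + lam • (1 : Matrix (Fin T) (Fin T) ℝ) with hA₂def
  set Q₁ := A₁⁻¹ with hQ₁def
  set Q₂ := A₂⁻¹ with hQ₂def
  have hQA₁ : Q₁ * A₁ = 1 := QA_one hlam hc₁ hM₁
  have hAQ₁ : A₁ * Q₁ = 1 := AQ_one hlam hc₁ hM₁
  have hQA₂ : Q₂ * A₂ = 1 := QA_one hlam hc₂ hM₂
  have hAQ₂ : A₂ * Q₂ = 1 := AQ_one hlam hc₂ hM₂
  have hQ₁psd : Q₁.PosSemidef := Q_psd hlam hc₁ hM₁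
  have hQ₂psd : Q₂.PosSemidef := Q_psd hlam hc₂ hM₂
  have hQ₁t : Q₁ᵀ = Q₁ := by
    rw [← Matrix.conjTranspose_eq_transpose_of_trivial, hQ₁psd.isHermitian.eq]
  have hQ₂t : Q₂ᵀ = Q₂ := by
    rw [← Matrix.conjTranspose_eq_transpose_of_trivial, hQ₂psd.isHermitian.eq]
  set t₁ := Q₁.trace with ht₁def
  set t₂ := Q₂.trace with ht₂def
  set s := (Q₁ * M₂ * Q₂).trace with hsdef
  set s' := (Q₁ * M₁ * Q₂).trace with hs'def
  set F := frobNorm (M₁ - M₂) with hFdef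
  have hF : 0 ≤ F := Real.sqrt_nonneg _
  -- trace of Q₁ * M₁
  have hQM₁ : Q₁ * M₁ = (1 + δ₁) • (1 : Matrix (Fin T) (Fin T) ℝ)
      - ((1 + δ₁) * lam) • Q₁ := by
    have hM₁eq : M₁ = (1 + δ₁) • A₁ - ((1 + δ₁) * lam) • (1 : Matrix (Fin T) (Fin T) ℝ) := by
      rw [hA₁def, smul_add, smul_smul, mul_inv_cancel₀ h1δ₁.ne', one_smul, smul_smul]
      abel
    conv_lhs => rw [hM₁eq]
    rw [Matrix.mul_sub, Matrix.mul_smul, Matrix.mul_smul, hQA₁, Matrix.mul_one]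
  have hQM₂ : Q₂ * M₂ = (1 + δ₂) • (1 : Matrix (Fin T) (Fin T) ℝ)
      - ((1 + δ₂) * lam) • Q₂ := by
    have hM₂eq : M₂ = (1 + δ₂) • A₂ - ((1 + δ₂) * lam) • (1 : Matrix (Fin T) (Fin T) ℝ) := by
      rw [hA₂def, smul_add, smul_smul, mul_inv_cancel₀ h1δ₂.ne', one_smul, smul_smul]
      abel
    conv_lhs => rw [hM₂eq]
    rw [Matrix.mul_sub, Matrix.mul_smul, Matrix.mul_smul, hQA₂, Matrix.mul_one]
  have h1 : (N:ℝ) * δ₁ = (1 + δ₁) * ((T:ℝ) - lam * t₁) := by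
    have : (Q₁ * M₁).trace = (1 + δ₁) * T - ((1 + δ₁) * lam) * t₁ := by
      rw [hQM₁, Matrix.trace_sub, Matrix.trace_smul, Matrix.trace_smul, Matrix.trace_one,
        Fintype.card_fin, smul_eq_mul, smul_eq_mul]
    have h := hfix₁
    rw [this] at h
    linear_combination (N:ℝ) * h + ((1 + δ₁) * (T:ℝ) - (1 + δ₁) * lam * t₁) * mul_inv_cancel₀ hN
  have h2 : (N:ℝ) * δ₂ = (1 + δ₂) * ((T:ℝ) - lam * t₂) := by
    have : (Q₂ * M₂).trace = (1 + δ₂) * T - ((1 + δ₂) * lam) * t₂ := by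
      rw [hQM₂, Matrix.trace_sub, Matrix.trace_smul, Matrix.trace_smul, Matrix.trace_one,
        Fintype.card_fin, smul_eq_mul, smul_eq_mul]
    have h := hfix₂
    rw [this] at h
    linear_combination (N:ℝ) * h + ((1 + δ₂) * (T:ℝ) - (1 + δ₂) * lam * t₂) * mul_inv_cancel₀ hN
  -- resolvent identity
  have hQdiff : Q₁ - Q₂ = (1 + δ₂)⁻¹ • (Q₁ * M₂ * Q₂) - (1 + δ₁)⁻¹ • (Q₁ * M₁ * Q₂) := by
    have hAdiff : A₂ - A₁ = (1 + δ₂)⁻¹ • M₂ - (1 + δ₁)⁻¹ • M₁ := by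
      rw [hA₁def, hA₂def]; abel
    have h0 : Q₁ * (A₂ - A₁) * Q₂ = Q₁ - Q₂ := by
      rw [Matrix.mul_sub, Matrix.sub_mul, Matrix.mul_assoc Q₁ A₂ Q₂, hAQ₂, Matrix.mul_one,
        hQA₁, Matrix.one_mul]
    rw [← h0, hAdiff, Matrix.mul_sub, Matrix.sub_mul, Matrix.mul_smul, Matrix.smul_mul,
      Matrix.mul_smul, Matrix.smul_mul]
  have h3 : t₁ - t₂ = (1 + δ₂)⁻¹ * s - (1 + δ₁)⁻¹ * s' := by
    have := congrArg Matrix.trace hQdiff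
    rwa [Matrix.trace_sub, Matrix.trace_sub, Matrix.trace_smul, Matrix.trace_smul,
      smul_eq_mul, smul_eq_mul] at this
  have e₁ : (1 + δ₁)⁻¹ * (1 + δ₁) = 1 := inv_mul_cancel₀ h1δ₁.ne'
  have e₂ : (1 + δ₂)⁻¹ * (1 + δ₂) = 1 := inv_mul_cancel₀ h1δ₂.ne'
  have h3' : (1 + δ₁) * (1 + δ₂) * (t₁ - t₂) = (1 + δ₁) * s - (1 + δ₂) * s' := by
    linear_combination ((1 + δ₁) * (1 + δ₂)) * h3 + ((1 + δ₁) * s) * e₂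
      - ((1 + δ₂) * s') * e₁
  have key : (δ₁ - δ₂) * ((1 + δ₁) * ((N:ℝ) - T + lam * t₁) + lam * s)
      = lam * (1 + δ₂) * (s' - s) := by
    linear_combination (1 + δ₁) * h1 - (1 + δ₁) * h2 - lam * h3'
  -- nonnegativity
  have ht₁ : 0 ≤ t₁ := psd_trace_nonneg' hQ₁psd
  have hs : 0 ≤ s := by
    rw [hsdef, Matrix.mul_assoc, Matrix.trace_mul_comm]
    exact psd_trace_mul_nonneg (MQ_psd hlam hc₂ hM₂) hQ₁psd
  -- Frobenius bound on Q₁ * Q₂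
  have hQ₁Q₁psd : (Q₁ * Q₁).PosSemidef := by
    have h := Matrix.posSemidef_conjTranspose_mul_self Q₁
    rwa [hQ₁psd.isHermitian.eq] at h
  have hb₂ := bound_psd (n := T) (lam := lam) (c := (1 + δ₂)⁻¹) (M := M₂) hlam hc₂ hM₂
  have hb₁ := bound_psd (n := T) (lam := lam) (c := (1 + δ₁)⁻¹) (M := M₁) hlam hc₁ hM₁
  have step1 : ((Q₁ * Q₁) * (Q₂ * Q₂)).trace ≤ (lam ^ 2)⁻¹ * (Q₁ * Q₁).trace := by
    have h0 := psd_trace_mul_nonneg hQ₁Q₁psd hb₂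
    rw [Matrix.mul_sub, Matrix.trace_sub, Matrix.mul_smul, Matrix.trace_smul,
      Matrix.mul_one, smul_eq_mul] at h0
    linarith
  have step2 : (Q₁ * Q₁).trace ≤ (lam ^ 2)⁻¹ * T := by
    have h0 := psd_trace_nonneg' hb₁
    rw [Matrix.trace_sub, Matrix.trace_smul, Matrix.trace_one, Fintype.card_fin,
      smul_eq_mul] at h0
    linarith
  have hfq : frobNorm (Q₁ * Q₂) ≤ Real.sqrt T / lam ^ 2 := by
    rw [frob_eq_trace]
    have e : ((Q₁ * Q₂)ᵀ * (Q₁ * Q₂)).trace = ((Q₁ * Q₁) * (Q₂ * Q₂)).trace := by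
      rw [Matrix.transpose_mul, hQ₁t, hQ₂t]
      rw [Matrix.trace_mul_comm]
      have : (Q₁ * Q₂) * (Q₂ * Q₁) = Q₁ * ((Q₂ * Q₂) * Q₁) := by
        simp [Matrix.mul_assoc]
      rw [this, Matrix.trace_mul_comm, Matrix.mul_assoc, Matrix.trace_mul_comm]
    rw [e]
    have hbound : ((Q₁ * Q₁) * (Q₂ * Q₂)).trace ≤ (lam ^ 2)⁻¹ * ((lam ^ 2)⁻¹ * T) := by
      have := mul_le_mul_of_nonneg_left step2 (by positivity : (0:ℝ) ≤ (lam ^ 2)⁻¹)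
      linarith
    have heq : (lam ^ 2)⁻¹ * ((lam ^ 2)⁻¹ * (T:ℝ)) = (T:ℝ) / (lam ^ 2) ^ 2 := by
      rw [eq_div_iff (by positivity)]
      field_simp
    calc Real.sqrt (((Q₁ * Q₁) * (Q₂ * Q₂)).trace)
        ≤ Real.sqrt ((T:ℝ) / (lam ^ 2) ^ 2) := by
          rw [← heq]; exact Real.sqrt_le_sqrt hbound
      _ = Real.sqrt T / lam ^ 2 := by
          rw [Real.sqrt_div (by positivity), Real.sqrt_sq (by positivity)]
  have hu : |s' - s| ≤ Real.sqrt T / lam ^ 2 * F := by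
    have hst : s' - s = ((Q₁ * Q₂)ᵀ * (M₁ - M₂)).trace := by
      have hΔ : Q₁ * M₁ * Q₂ - Q₁ * M₂ * Q₂ = Q₁ * (M₁ - M₂) * Q₂ := by
        rw [Matrix.mul_sub, Matrix.sub_mul]
      have : s' - s = (Q₁ * (M₁ - M₂) * Q₂).trace := by
        rw [hs'def, hsdef, ← Matrix.trace_sub, hΔ]
      rw [this, Matrix.transpose_mul, hQ₁t, hQ₂t, Matrix.mul_assoc, Matrix.trace_mul_comm,
        Matrix.mul_assoc]
      exact Matrix.trace_mul_comm _ _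
    rw [hst]
    calc |((Q₁ * Q₂)ᵀ * (M₁ - M₂)).trace| ≤ frobNorm (Q₁ * Q₂) * F :=
          abs_trace_transpose_mul_le _ _
      _ ≤ Real.sqrt T / lam ^ 2 * F := mul_le_mul_of_nonneg_right hfq hF
  -- final assembly
  clear_value t₁ t₂ s s' F
  set B := Real.sqrt T / lam ^ 2 * F with hBdef
  have hB : 0 ≤ B := by
    rw [hBdef]
    exact mul_nonneg (by positivity) hF
  have hd : 0 ≤ δ₁ - δ₂ := by linarith
  have lhs_lb : (1 + δ₁) * ((δ₁ - δ₂) * ((N:ℝ) - T))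
      ≤ (δ₁ - δ₂) * ((1 + δ₁) * ((N:ℝ) - T + lam * t₁) + lam * s) := by
    have e0 : (δ₁ - δ₂) * ((1 + δ₁) * ((N:ℝ) - T + lam * t₁) + lam * s)
        = (1 + δ₁) * ((δ₁ - δ₂) * ((N:ℝ) - T))
          + (δ₁ - δ₂) * ((1 + δ₁) * (lam * t₁) + lam * s) := by ring
    have e1 : 0 ≤ (δ₁ - δ₂) * ((1 + δ₁) * (lam * t₁) + lam * s) :=
      mul_nonneg hd (add_nonneg (mul_nonneg h1δ₁.le (mul_nonneg hlam.le ht₁))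
        (mul_nonneg hlam.le hs))
    linarith
  have rhs_ub : lam * (1 + δ₂) * (s' - s) ≤ (1 + δ₁) * (lam * B) := by
    have h01 : lam * (1 + δ₂) * (s' - s) ≤ lam * (1 + δ₂) * B := by
      have : s' - s ≤ B := le_trans (le_abs_self _) hu
      exact mul_le_mul_of_nonneg_left this (by positivity)
    have h02 : lam * (1 + δ₂) * B ≤ lam * (1 + δ₁) * B := by
      have : lam * (1 + δ₂) ≤ lam * (1 + δ₁) :=
        mul_le_mul_of_nonneg_left (by linarith) hlam.le
      exact mul_le_mul_of_nonneg_right this hB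
    calc lam * (1 + δ₂) * (s' - s) ≤ lam * (1 + δ₂) * B := h01
      _ ≤ lam * (1 + δ₁) * B := h02
      _ = (1 + δ₁) * (lam * B) := by ring
  have hq : (δ₁ - δ₂) * ((N:ℝ) - T) ≤ lam * B := by
    have := le_trans (lhs_lb.trans_eq key) rhs_ub
    exact le_of_mul_le_mul_left this h1δ₁
  have hlamB : lam * B = Real.sqrt T / lam * F := by
    rw [hBdef]; field_simp
  rw [div_mul_eq_mul_div, le_div_iff₀ (by positivity : (0:ℝ) < lam * ((N:ℝ) - T))]
  have hq2 : lam * ((δ₁ - δ₂) * ((N:ℝ) - T)) ≤ lam * (lam * B) :=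
    mul_le_mul_of_nonneg_left hq hlam.le
  have hc : lam * (lam * B) = Real.sqrt T * F := by
    rw [hlamB]; field_simp
  calc (δ₁ - δ₂) * (lam * ((N:ℝ) - T)) = lam * ((δ₁ - δ₂) * ((N:ℝ) - T)) := by ring
    _ ≤ lam * (lam * B) := hq2
    _ = Real.sqrt T * F := hc

/-- Lipschitzness (in Frobenius norm) of the RMT fixed-point parameter
`M ↦ δ(M)`, with constant `√T / (λ(N−T))`. -/
theorem delta_fixed_point_lipschitz
    (T N : ℕ) (hTN : T < N) (lam : ℝ) (hlam : 0 < lam)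
    (M₁ M₂ : Matrix (Fin T) (Fin T) ℝ) (hM₁ : M₁.PosSemidef) (hM₂ : M₂.PosSemidef)
    (δ₁ δ₂ : ℝ) (hδ₁ : 0 ≤ δ₁) (hδ₂ : 0 ≤ δ₂)
    (hfix₁ : δ₁ = (N : ℝ)⁻¹ *
      ((((1 + δ₁)⁻¹ • M₁ + lam • (1 : Matrix (Fin T) (Fin T) ℝ))⁻¹ * M₁).trace))
    (hfix₂ : δ₂ = (N : ℝ)⁻¹ *
      ((((1 + δ₂)⁻¹ • M₂ + lam • (1 : Matrix (Fin T) (Fin T) ℝ))⁻¹ * M₂).trace)) :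
    |δ₁ - δ₂| ≤ Real.sqrt T / (lam * ((N : ℝ) - T)) * frobNorm (M₁ - M₂) := by
  rcases le_total δ₂ δ₁ with h | h
  · rw [abs_of_nonneg (by linarith)]
    exact delta_aux T N hTN lam hlam M₁ M₂ hM₁ hM₂ δ₁ δ₂ hδ₁ hδ₂ h hfix₁ hfix₂
  · rw [abs_of_nonpos (by linarith), neg_sub]
    have hswap := delta_aux T N hTN lam hlam M₂ M₁ hM₂ hM₁ δ₂ δ₁ hδ₂ hδ₁ h hfix₂ hfix₁
    have hfr : frobNorm (M₂ - M₁) = frobNorm (M₁ - M₂) := by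
      unfold frobNorm
      congr 1
      refine Finset.sum_congr rfl fun i _ => Finset.sum_congr rfl fun j _ => ?_
      rw [Matrix.sub_apply, Matrix.sub_apply]
      ring
    rwa [hfr] at hswap
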